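/- Refinement monotonicity of PCE with absolute-value loss: if partition P′ of a finite dataset D refines partition P (every group of P′ is contained in a group of P), then Σ_{G∈P} (|G|/|D|) ‖S(f(G)) − S(G)‖ ≤ Σ_{G′∈P′} (|G′|/|D|) ‖S(f(G′)) − S(G′)‖. -/
import Mathlib
set_option maxHeartbeats 1000000


open Finset

lemma pce_term_eq {ι V : Type*} [NormedAddCommGroup V] [NormedSpace ℝ V]
    (s D : Finset ι) (hs : s.Nonempty) (y f : ι → V) :
    ((s.card : ℝ) / (D.card : ℝ)) *
      ‖((s.card : ℝ))⁻¹ • ∑ i ∈ s, f i - ((s.card : ℝ))⁻¹ • ∑ i ∈ s, y i‖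
    = ‖∑ i ∈ s, (f i - y i)‖ / (D.card : ℝ) := by
  have hc : (0:ℝ) < s.card := by exact_mod_cast hs.card_pos
  rw [← smul_sub, ← Finset.sum_sub_distrib, norm_smul, Real.norm_eq_abs, abs_inv,
    abs_of_pos hc, div_mul_eq_mul_div, ← mul_assoc, mul_inv_cancel₀ hc.ne', one_mul]

theorem pce_refinement_monotone
    {ι γ γ' V : Type*} [DecidableEq γ] [DecidableEq γ']
    [NormedAddCommGroup V] [NormedSpace ℝ V]
    (D : Finset ι) (hD : D.Nonempty)
    (g : ι → γ) (g' : ι → γ') (c : γ' → γ)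
    (hrefine : ∀ i ∈ D, g i = c (g' i))
    (y f : ι → V) :
    ∑ b ∈ D.image g,
      (((D.filter (fun i => g i = b)).card : ℝ) / (D.card : ℝ)) *
        ‖(((D.filter (fun i => g i = b)).card : ℝ))⁻¹ •
            ∑ i ∈ D.filter (fun i => g i = b), f i
          - (((D.filter (fun i => g i = b)).card : ℝ))⁻¹ •
            ∑ i ∈ D.filter (fun i => g i = b), y i‖
    ≤ ∑ b ∈ D.image g',
      (((D.filter (fun i => g' i = b)).card : ℝ) / (D.card : ℝ)) *
        ‖(((D.filter (fun i => g' i = b)).card : ℝ))⁻¹ •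
            ∑ i ∈ D.filter (fun i => g' i = b), f i
          - (((D.filter (fun i => g' i = b)).card : ℝ))⁻¹ •
            ∑ i ∈ D.filter (fun i => g' i = b), y i‖ := by
  have hDpos : (0:ℝ) < D.card := by exact_mod_cast hD.card_pos
  have hL : ∀ b ∈ D.image g,
      (((D.filter (fun i => g i = b)).card : ℝ) / (D.card : ℝ)) *
        ‖(((D.filter (fun i => g i = b)).card : ℝ))⁻¹ •
            ∑ i ∈ D.filter (fun i => g i = b), f i
          - (((D.filter (fun i => g i = b)).card : ℝ))⁻¹ •
            ∑ i ∈ D.filter (fun i => g i = b), y i‖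
      = ‖∑ i ∈ D.filter (fun i => g i = b), (f i - y i)‖ / (D.card : ℝ) := by
    intro b hb
    have hne : (D.filter (fun i => g i = b)).Nonempty := by
      obtain ⟨i, hi, hgi⟩ := mem_image.1 hb
      exact ⟨i, mem_filter.2 ⟨hi, hgi⟩⟩
    exact pce_term_eq _ _ hne _ _
  have hR : ∀ b ∈ D.image g',
      (((D.filter (fun i => g' i = b)).card : ℝ) / (D.card : ℝ)) *
        ‖(((D.filter (fun i => g' i = b)).card : ℝ))⁻¹ •
            ∑ i ∈ D.filter (fun i => g' i = b), f i
          - (((D.filter (fun i => g' i = b)).card : ℝ))⁻¹ •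
            ∑ i ∈ D.filter (fun i => g' i = b), y i‖
      = ‖∑ i ∈ D.filter (fun i => g' i = b), (f i - y i)‖ / (D.card : ℝ) := by
    intro b hb
    have hne : (D.filter (fun i => g' i = b)).Nonempty := by
      obtain ⟨i, hi, hgi⟩ := mem_image.1 hb
      exact ⟨i, mem_filter.2 ⟨hi, hgi⟩⟩
    exact pce_term_eq _ _ hne _ _
  rw [Finset.sum_congr rfl hL, Finset.sum_congr rfl hR, ← Finset.sum_div, ← Finset.sum_div]
  apply div_le_div_of_nonneg_right _ hDpos.le
  -- regroup the RHS sum by fibers of c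
  have hmap : ∀ b' ∈ D.image g', c b' ∈ D.image g := by
    intro b' hb'
    obtain ⟨i, hi, rfl⟩ := mem_image.1 hb'
    exact mem_image.2 ⟨i, hi, (hrefine i hi)⟩
  rw [← Finset.sum_fiberwise_of_maps_to hmap]
  apply Finset.sum_le_sum
  intro b hb
  have hsplit : ∑ i ∈ D.filter (fun i => g i = b), (f i - y i)
      = ∑ b' ∈ (D.image g').filter (fun b' => c b' = b),
          ∑ i ∈ D.filter (fun i => g' i = b'), (f i - y i) := by
    have hmap2 : ∀ i ∈ D.filter (fun i => g i = b),
        g' i ∈ (D.image g').filter (fun b' => c b' = b) := by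
      intro i hi
      obtain ⟨hiD, hib⟩ := mem_filter.1 hi
      exact mem_filter.2 ⟨mem_image.2 ⟨i, hiD, rfl⟩, by rw [← hrefine i hiD, hib]⟩
    rw [← Finset.sum_fiberwise_of_maps_to hmap2]
    apply Finset.sum_congr rfl
    intro b' hb'
    obtain ⟨_, hcb⟩ := mem_filter.1 hb'
    apply Finset.sum_congr _ (fun _ _ => rfl)
    ext i
    simp only [mem_filter, and_assoc]
    constructor
    · rintro ⟨hiD, _, h2⟩; exact ⟨hiD, h2⟩
    · rintro ⟨hiD, h2⟩
      exact ⟨hiD, by rw [hrefine i hiD, h2, hcb], h2⟩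
  rw [hsplit]
  exact norm_sum_le _ _
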